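/- arXiv:1307.4248 — 3 statements merged into one kernel-verified Lean document; each statement's English description precedes it below -/
import Mathlib

section
/- If h : ℝ² → ℝ is a C¹ function that is constant on the connected components of the level sets of a C¹ function H : ℝ² → ℝ, then ∇h(x) · A∇H(x) = 0 for every x ∈ ℝ², where A is the standard symplectic matrix. -/
open MeasureTheory
open scoped RealInnerProductSpace

noncomputable section

abbrev E2 : Type := EuclideanSpace ℝ (Fin 2)

/-- `x` and `y` lie in the same connected component of a level set of `H`. -/
def sameComp (H : E2 → ℝ) (x y : E2) : Prop :=
  y ∈ connectedComponentIn (H ⁻¹' {H x}) x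

/-- Application of the standard symplectic matrix: `A(x₁, x₂) = (−x₂, x₁)`. -/
def symp (v : E2) : E2 := WithLp.toLp 2 (fun i : Fin 2 => if i = 0 then -(v 1) else v 0)

lemma inner_symp_self (g : E2) : ⟪g, symp g⟫ = 0 := by
  simp [PiLp.inner_apply, Fin.sum_univ_two, symp]
  ring

lemma grad_inner (f : E2 → ℝ) (x v : E2) : ⟪gradient f x, v⟫ = fderiv ℝ f x v := by
  simp [gradient, InnerProductSpace.toDual_symm_apply]

theorem stmt2 (H : E2 → ℝ) (hH : ContDiff ℝ 1 H)
    (h : E2 → ℝ) (hh : ContDiff ℝ 1 h)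
    (hconst : ∀ x y, sameComp H x y → h x = h y) :
    ∀ x : E2, ⟪gradient h x, symp (gradient H x)⟫ = 0 := by
  intro x
  set f' : E2 →L[ℝ] ℝ := fderiv ℝ H x with hf'def
  by_cases hz : f' = 0
  · have hg0 : gradient H x = 0 := by
      rw [gradient, ← hf'def, hz]; simp
    rw [hg0]
    have : symp 0 = (0 : E2) := by
      ext i; simp [symp]
    rw [this, inner_zero_right]
  · -- f' is surjective
    have hsurj : f'.range = ⊤ := by
      obtain ⟨v, hv⟩ : ∃ v, f' v ≠ 0 := by
        by_contra hc
        push_neg at hc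
        exact hz (ContinuousLinearMap.ext fun v => by simp [hc v])
      rw [LinearMap.range_eq_top]
      intro c
      exact ⟨(c / f' v) • v, by simp [div_mul_cancel₀ c hv]⟩
    have hs : HasStrictFDerivAt H f' x := (hH.contDiffAt).hasStrictFDerivAt one_ne_zero
    set K := f'.ker with hK
    set φ := hs.implicitToOpenPartialHomeomorph H f' hsurj with hφ
    set g : K → E2 := hs.implicitFunction H f' hsurj (H x) with hg
    have g0 : g 0 = x := hs.implicitFunction_apply_image hsurj
    have gderiv : HasStrictFDerivAt g K.subtypeL 0 := by
      have := hs.to_implicitFunction hsurj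
      exact this
    -- g t = φ.symm (H x, t)
    have gdef : ∀ t : K, g t = φ.symm (H x, t) := fun t => rfl
    -- open set where g is continuous
    have hUopen : IsOpen {t : K | (H x, t) ∈ φ.target} :=
      φ.open_target.preimage (by fun_prop)
    have hU0 : (0 : K) ∈ {t : K | (H x, t) ∈ φ.target} :=
      hs.mem_implicitToOpenPartialHomeomorph_target hsurj
    have hcont : ContinuousOn g {t : K | (H x, t) ∈ φ.target} := by
      have : ContinuousOn (fun t : K => φ.symm (H x, t)) {t : K | (H x, t) ∈ φ.target} :=
        φ.continuousOn_symm.comp (Continuous.continuousOn (by fun_prop)) fun t ht => ht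
      intro t ht
      exact this t ht
    -- eventually H (g t) = H x
    have hev : ∀ᶠ t : K in nhds 0, H (g t) = H x := by
      have hmap := hs.map_implicitFunction_eq hsurj
      have htend : Filter.Tendsto (fun t : K => ((H x : ℝ), t)) (nhds 0) (nhds (H x, 0)) := by
        exact (Continuous.tendsto (by fun_prop) 0)
      exact htend.eventually hmap
    -- choose a ball
    obtain ⟨ε, hε, hball⟩ := Metric.mem_nhds_iff.mp
      (Filter.inter_mem (hUopen.mem_nhds hU0) hev)
    -- the image of the ball is connected, in the level set, contains x
    have hconn : IsPreconnected (g '' Metric.ball (0 : K) ε) := by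
      apply IsPreconnected.image (convex_ball (0 : K) ε).isPreconnected
      exact hcont.mono fun t ht => (hball ht).1
    have hsub : g '' Metric.ball (0 : K) ε ⊆ H ⁻¹' {H x} := by
      rintro _ ⟨t, ht, rfl⟩
      exact (hball ht).2
    have hxmem : x ∈ g '' Metric.ball (0 : K) ε :=
      ⟨0, Metric.mem_ball_self hε, g0⟩
    have hcomp : g '' Metric.ball (0 : K) ε ⊆ connectedComponentIn (H ⁻¹' {H x}) x :=
      hconn.subset_connectedComponentIn hxmem hsub
    -- h ∘ g is locally constant near 0
    have hconst' : ∀ᶠ t : K in nhds 0, (h ∘ g) t = h x := by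
      filter_upwards [Metric.ball_mem_nhds (0 : K) hε] with t ht
      exact (hconst x (g t) (hcomp ⟨t, ht, rfl⟩)).symm
    -- derivative of h ∘ g at 0
    have hd1 : HasFDerivAt h (fderiv ℝ h x) (g 0) := by
      rw [g0]; exact (hh.differentiable one_ne_zero x).hasFDerivAt
    have hd : HasFDerivAt (h ∘ g) ((fderiv ℝ h x).comp K.subtypeL) 0 :=
      hd1.comp 0 gderiv.hasFDerivAt
    have hd0 : HasFDerivAt (fun _ : K => h x) ((fderiv ℝ h x).comp K.subtypeL) 0 := by
      apply hd.congr_of_eventuallyEq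
      filter_upwards [hconst'] with t ht using ht.symm
    have hzero : (fderiv ℝ h x).comp K.subtypeL = 0 :=
      hd0.unique (hasFDerivAt_const (h x) 0)
    -- the symplectic gradient is in the kernel
    have hvker : symp (gradient H x) ∈ K := by
      rw [hK, LinearMap.mem_ker]
      have := grad_inner H x (symp (gradient H x))
      rw [inner_symp_self] at this
      exact (ContinuousLinearMap.coe_coe f' ▸ this.symm : _)
    calc ⟪gradient h x, symp (gradient H x)⟫
        = fderiv ℝ h x (symp (gradient H x)) := grad_inner h x _
      _ = ((fderiv ℝ h x).comp K.subtypeL) ⟨symp (gradient H x), hvker⟩ := rfl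
      _ = 0 := by rw [hzero]; rfl
end
end

section
/- Let H : ℝ² → ℝ be C¹. The subset Π of L²(μ) consisting of functions that factor through the quotient map π : ℝ² → Γ (where Γ is the space of connected components of level sets of H) is a closed linear subspace of L²(μ). -/
open MeasureTheory Filter Topology

set_option synthInstance.maxHeartbeats 1000000

noncomputable section

theorem stmt5 (H : E2 → ℝ) (hH : ContDiff ℝ 1 H)
    (μ : Measure E2) [SigmaFinite μ]
    (S : Set (Lp ℝ 2 μ))
    (hS : S = {f : Lp ℝ 2 μ |
      ∃ u : Quot (sameComp H) → ℝ, (f : E2 → ℝ) =ᵐ[μ] fun x => u (Quot.mk _ x)}) :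
    IsClosed S ∧ (0 : Lp ℝ 2 μ) ∈ S ∧
      (∀ f g : Lp ℝ 2 μ, f ∈ S → g ∈ S → f + g ∈ S) ∧
      (∀ (c : ℝ) (f : Lp ℝ 2 μ), f ∈ S → c • f ∈ S) := by
  subst hS
  refine ⟨?_, ?_, ?_, ?_⟩
  · -- closedness
    apply IsSeqClosed.isClosed
    intro f g hf hfg
    choose u hu using hf
    have htm : TendstoInMeasure μ (fun n => (f n : E2 → ℝ)) atTop g :=
      tendstoInMeasure_of_tendsto_Lp hfg
    obtain ⟨ns, _, hns⟩ := htm.exists_seq_tendsto_ae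
    classical
    set v : Quot (sameComp H) → ℝ := fun q =>
      if h : ∃ l, Tendsto (fun k => u (ns k) q) atTop (𝓝 l) then h.choose else 0 with hv
    refine ⟨v, ?_⟩
    have hall : ∀ᵐ x ∂μ, ∀ k, (f (ns k) : E2 → ℝ) x = u (ns k) (Quot.mk _ x) :=
      ae_all_iff.2 fun k => hu (ns k)
    filter_upwards [hns, hall] with x hx hxall
    have hx' : Tendsto (fun k => u (ns k) (Quot.mk (sameComp H) x)) atTop (𝓝 (g x)) := by
      simpa only [hxall] using hx
    have hex : ∃ l, Tendsto (fun k => u (ns k) (Quot.mk (sameComp H) x)) atTop (𝓝 l) :=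
      ⟨g x, hx'⟩
    have : v (Quot.mk (sameComp H) x) = hex.choose := by rw [hv]; simp [hex]
    rw [this]
    exact tendsto_nhds_unique hx' hex.choose_spec
  · exact ⟨0, by filter_upwards [Lp.coeFn_zero (E := ℝ) 2 μ] with x hx using hx⟩
  · rintro f g ⟨uf, huf⟩ ⟨ug, hug⟩
    exact ⟨fun q => uf q + ug q, by
      filter_upwards [Lp.coeFn_add f g, huf, hug] with x h1 h2 h3
      rw [h1, Pi.add_apply, h2, h3]⟩
  · rintro c f ⟨uf, huf⟩
    exact ⟨fun q => c * uf q, by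
      filter_upwards [Lp.coeFn_smul c f, huf] with x h1 h2
      simp [h1, h2]⟩
end
end

section
/- In particular, for a nondegenerate vertex condition: if the preimage π⁻¹(O) has Lebesgue measure zero, then Σ_{i∈J₊(O)} α_i(O) = Σ_{i∈J₋(O)} α_i(O), where α_i(O) = lim_{m→H(O), m∈I_i} ∮_{C_i(m)} |∇H| dℓ. -/
open MeasureTheory Set Filter
open scoped RealInnerProductSpace Topology

noncomputable section

/-- The intersection of a decreasing sequence of compact preconnected sets is preconnected. -/
lemma my_isPreconnected_iInter {X : Type*} [TopologicalSpace X] [T2Space X]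
    (K : ℕ → Set X) (hmono : ∀ ⦃n m⦄, n ≤ m → K m ⊆ K n)
    (hc : ∀ n, IsCompact (K n)) (hconn : ∀ n, IsPreconnected (K n)) :
    IsPreconnected (⋂ n, K n) := by
  set S := ⋂ n, K n with hS
  have hScl : IsClosed S := isClosed_iInter fun n => (hc n).isClosed
  have hScpt : IsCompact S := (hc 0).of_isClosed_subset hScl (iInter_subset _ 0)
  intro u v hu hv hsub hne_u hne_v
  by_contra hempty
  rw [Set.not_nonempty_iff_eq_empty] at hempty
  set A := S \ v with hA
  set B := S \ u with hB
  have hAu : A ⊆ u := by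
    intro x hx
    rcases hsub hx.1 with h | h
    · exact h
    · exact absurd h hx.2
  have hBv : B ⊆ v := by
    intro x hx
    rcases hsub hx.1 with h | h
    · exact absurd h hx.2
    · exact h
  have hAne : A.Nonempty := by
    obtain ⟨x, hxS, hxu⟩ := hne_u
    refine ⟨x, hxS, fun hxv => ?_⟩
    have : x ∈ S ∩ (u ∩ v) := ⟨hxS, hxu, hxv⟩
    simp [hempty] at this
  have hBne : B.Nonempty := by
    obtain ⟨x, hxS, hxv⟩ := hne_v
    refine ⟨x, hxS, fun hxu => ?_⟩
    have : x ∈ S ∩ (u ∩ v) := ⟨hxS, hxu, hxv⟩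
    simp [hempty] at this
  have hAcpt : IsCompact A := hScpt.of_isClosed_subset (hScl.sdiff hv) diff_subset
  have hBcpt : IsCompact B := hScpt.of_isClosed_subset (hScl.sdiff hu) diff_subset
  have hdisj : Disjoint A B := by
    rw [Set.disjoint_left]
    intro x hxA hxB
    rcases hsub hxA.1 with h | h
    · exact hxB.2 h
    · exact hxA.2 h
  obtain ⟨U, V, hU, hV, hAU, hBV, hUV⟩ :=
    SeparatedNhds.of_isCompact_isCompact hAcpt hBcpt hdisj
  have hcov : ∃ n, K n ⊆ U ∪ V := by
    by_contra hnc
    push_neg at hnc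
    have hne : ∀ n, (K n \ (U ∪ V)).Nonempty := by
      intro n
      rcases not_subset.mp (hnc n) with ⟨x, hx1, hx2⟩
      exact ⟨x, hx1, hx2⟩
    have hdir : Directed (· ⊇ ·) (fun n => K n \ (U ∪ V)) := by
      intro m n
      exact ⟨max m n, Set.diff_subset_diff_left (hmono (le_max_left _ _)),
        Set.diff_subset_diff_left (hmono (le_max_right _ _))⟩
    have := IsCompact.nonempty_iInter_of_directed_nonempty_isCompact_isClosed
      (fun n => K n \ (U ∪ V)) hdir hne
      (fun n => (hc n).of_isClosed_subset ((hc n).isClosed.sdiff (hU.union hV)) diff_subset)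
      (fun n => (hc n).isClosed.sdiff (hU.union hV))
    obtain ⟨x, hx⟩ := this
    simp only [Set.mem_iInter, Set.mem_diff] at hx
    have hxS : x ∈ S := Set.mem_iInter.mpr fun n => (hx n).1
    have : x ∈ A ∪ B := by
      rcases hsub hxS with h | h
      · left; refine ⟨hxS, fun hxv => ?_⟩
        have : x ∈ S ∩ (u ∩ v) := ⟨hxS, h, hxv⟩
        simp [hempty] at this
      · right; refine ⟨hxS, fun hxu => ?_⟩
        have : x ∈ S ∩ (u ∩ v) := ⟨hxS, hxu, h⟩
        simp [hempty] at this
    rcases this with h | h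
    · exact (hx 0).2 (Or.inl (hAU h))
    · exact (hx 0).2 (Or.inr (hBV h))
  obtain ⟨n, hn⟩ := hcov
  have h1 : (K n ∩ U).Nonempty := hAne.mono (subset_inter (fun x hx => iInter_subset K n hx.1) hAU)
  have h2 : (K n ∩ V).Nonempty := hBne.mono (subset_inter (fun x hx => iInter_subset K n hx.1) hBV)
  obtain ⟨x, hx⟩ := hconn n U V hU hV hn h1 h2
  exact hUV.le_bot ⟨hx.2.1, hx.2.2⟩ |>.elim

/-- The Laplacian of `f : ℝ² → ℝ`. -/
def lap (f : E2 → ℝ) (x : E2) : ℝ :=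
  ∑ i : Fin 2,
    fderiv ℝ (fun y => fderiv ℝ f y (EuclideanSpace.single i 1)) x (EuclideanSpace.single i 1)

lemma my_continuous_lap (H : E2 → ℝ) (hH : ContDiff ℝ 2 H) : Continuous (lap H) := by
  have h1 : ContDiff ℝ 1 (fderiv ℝ H) := hH.fderiv_right (by norm_num)
  unfold lap
  refine continuous_finset_sum _ fun i _ => ?_
  have h2 : ContDiff ℝ 1 (fun y => fderiv ℝ H y (EuclideanSpace.single i 1)) :=
    (ContinuousLinearMap.apply ℝ ℝ (EuclideanSpace.single i 1 : E2)).contDiff.comp h1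
  exact (ContinuousLinearMap.apply ℝ ℝ (EuclideanSpace.single i 1 : E2)).continuous.comp
    (h2.continuous_fderiv one_ne_zero)

theorem stmt14 {ι : Type*}
    (H : E2 → ℝ) (hH : ContDiff ℝ 2 H) (hcpt : ∀ c : ℝ, IsCompact (H ⁻¹' {c}))
    (c₀ : ℝ) (x₀ : E2) (hx₀ : H x₀ = c₀)
    -- the vertex: connected level component of `H` containing a critical point
    (O : Set E2) (hO : O = connectedComponentIn (H ⁻¹' {c₀}) x₀)
    (hcrit : ∃ x ∈ O, gradient H x = 0)
    -- the vertex has Lebesgue-measure zero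
    (hvol : volume O = 0)
    (δ₀ : ℝ) (hδ₀ : 0 < δ₀)
    (Ω : ℝ → Set E2)
    (hΩ : ∀ δ, Ω δ = connectedComponentIn (H ⁻¹' Set.Ioo (c₀ - δ) (c₀ + δ)) x₀)
    (hregΩ : ∀ δ ∈ Set.Ioo 0 δ₀, ∀ x ∈ Ω δ \ O, gradient H x ≠ 0)
    (Jp Jm : Finset ι) (C : ι → ℝ → Set E2)
    (hfront : ∀ δ ∈ Set.Ioo 0 δ₀,
      frontier (Ω δ) = (⋃ i ∈ Jp, C i (c₀ + δ)) ∪ ⋃ i ∈ Jm, C i (c₀ - δ))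
    -- the fluxes of ∇H through the level curves
    (flux : ι → ℝ → ℝ)
    (hflux : ∀ i m, flux i m = ∫ x in C i m,
      ‖gradient H x‖ ∂(Measure.hausdorffMeasure 1))
    -- the divergence theorem identity for W = ∇H
    (hDiv : ∀ δ ∈ Set.Ioo 0 δ₀,
      ∫ x in Ω δ, lap H x = (∑ i ∈ Jp, flux i (c₀ + δ)) - ∑ i ∈ Jm, flux i (c₀ - δ))
    -- the limits α_i(O)
    (α : ι → ℝ)
    (hαp : ∀ i ∈ Jp, Tendsto (flux i) (𝓝[>] c₀) (𝓝 (α i)))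
    (hαm : ∀ i ∈ Jm, Tendsto (flux i) (𝓝[<] c₀) (𝓝 (α i))) :
    ∑ i ∈ Jp, α i = ∑ i ∈ Jm, α i := by
  have hHc : Continuous H := hH.continuous
  have lapc : Continuous (lap H) := my_continuous_lap H hH
  -- basic properties of Ω
  have hx₀mem : ∀ δ : ℝ, 0 < δ → x₀ ∈ Ω δ := by
    intro δ hδ
    rw [hΩ]
    exact mem_connectedComponentIn (by simp [hx₀, hδ])
  have hopen : ∀ δ : ℝ, IsOpen (Ω δ) := by
    intro δ
    rw [hΩ]
    exact (isOpen_Ioo.preimage hHc).connectedComponentIn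
  have hconn : ∀ δ : ℝ, IsPreconnected (Ω δ) := by
    intro δ
    rw [hΩ]
    exact isPreconnected_connectedComponentIn
  have hsubIoo : ∀ δ : ℝ, Ω δ ⊆ H ⁻¹' Set.Ioo (c₀ - δ) (c₀ + δ) := by
    intro δ
    rw [hΩ]
    exact connectedComponentIn_subset _ _
  have hmono : ∀ ⦃δ δ' : ℝ⦄, δ ≤ δ' → Ω δ ⊆ Ω δ' := by
    intro δ δ' h
    rw [hΩ, hΩ]
    exact connectedComponentIn_mono _ (Set.preimage_mono
      (Set.Ioo_subset_Ioo (by linarith) (by linarith)))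
  have hclosure : ∀ δ : ℝ, closure (Ω δ) ⊆ H ⁻¹' Set.Icc (c₀ - δ) (c₀ + δ) := by
    intro δ
    exact closure_minimal ((hsubIoo δ).trans (Set.preimage_mono Set.Ioo_subset_Icc_self))
      (isClosed_Icc.preimage hHc)
  -- some Ω δ₁ is bounded
  obtain ⟨δ₁, hδ₁pos, hδ₁lt, hbd⟩ :
      ∃ δ₁ : ℝ, 0 < δ₁ ∧ δ₁ < δ₀ ∧ Bornology.IsBounded (Ω δ₁) := by
    by_contra hcon
    push_neg at hcon
    obtain ⟨R, hR⟩ := (hcpt c₀).isBounded.subset_ball (0 : E2)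
    set r : ℝ := max R ‖x₀‖ + 1 with hr
    have hr0 : (0 : ℝ) < r := by positivity
    have hsph : (Metric.sphere (0 : E2) r).Nonempty :=
      NormedSpace.sphere_nonempty.mpr hr0.le
    obtain ⟨z, hz, hzmin⟩ := (isCompact_sphere (0 : E2) r).exists_isMinOn hsph
      ((hHc.sub continuous_const).abs.continuousOn)
    have hz0 : |H z - c₀| ≤ 0 := by
      by_contra hpos
      push_neg at hpos
      set δ := min (δ₀ / 2) (|H z - c₀| / 2) with hδdef
      have hδpos : 0 < δ := lt_min (by linarith) (by linarith)
      have hδlt : δ < δ₀ := (min_le_left _ _).trans_lt (by linarith)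
      have hub := hcon δ hδpos hδlt
      rw [isBounded_iff_forall_norm_le] at hub
      push_neg at hub
      obtain ⟨y, hy, hyr⟩ := hub r
      have hIcc : r ∈ Set.Icc ‖x₀‖ ‖y‖ :=
        ⟨by simp [hr]; linarith [le_max_right R ‖x₀‖], hyr.le⟩
      have himg := (hconn δ).intermediate_value (hx₀mem δ hδpos) hy
        (continuous_norm.continuousOn) hIcc
      obtain ⟨w, hw, hwr⟩ := himg
      have hwsphere : w ∈ Metric.sphere (0 : E2) r := by
        simp [mem_sphere_zero_iff_norm, hwr]
      have hwH := hsubIoo δ hw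
      simp only [Set.mem_preimage, Set.mem_Ioo] at hwH
      have habs : |H w - c₀| < δ := abs_sub_lt_iff.mpr ⟨by linarith [hwH.2], by linarith [hwH.1]⟩
      have := hzmin hwsphere
      simp only at this
      have : |H z - c₀| ≤ |H w - c₀| := this
      have : |H z - c₀| < δ := lt_of_le_of_lt this habs
      have : |H z - c₀| < |H z - c₀| / 2 := lt_of_lt_of_le this (min_le_right _ _)
      linarith
    have hzc : H z = c₀ := by
      have := abs_nonneg (H z - c₀)
      have : |H z - c₀| = 0 := le_antisymm hz0 this
      have := abs_eq_zero.mp this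
      linarith
    have hzball : z ∈ Metric.ball (0 : E2) R := hR (by simp [hzc])
    rw [Metric.mem_ball, dist_zero_right] at hzball
    rw [Metric.mem_sphere, dist_zero_right] at hz
    have : r ≤ max R ‖x₀‖ := hz ▸ hzball.le.trans (le_max_left _ _)
    simp [hr] at this
    linarith [le_max_left R ‖x₀‖, this]
  -- decreasing widths
  set ε : ℕ → ℝ := fun n => δ₁ / (n + 1) with hε
  have hεpos : ∀ n, 0 < ε n := fun n => div_pos hδ₁pos (by positivity)
  have hεle : ∀ n, ε n ≤ δ₁ := by
    intro n
    apply div_le_self hδ₁pos.le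
    simp only [le_add_iff_nonneg_left]
    positivity
  have hεanti : ∀ ⦃n m : ℕ⦄, n ≤ m → ε m ≤ ε n := by
    intro n m h
    apply div_le_div_of_nonneg_left hδ₁pos.le (by positivity)
    simp only [add_le_add_iff_right, Nat.cast_le]
    exact_mod_cast h
  have hεsmall : ∀ δ : ℝ, 0 < δ → ∃ n, ε n ≤ δ := by
    intro δ hδ
    obtain ⟨n, hn⟩ := exists_nat_gt (δ₁ / δ)
    refine ⟨n, ?_⟩
    rw [div_le_iff₀ (by positivity)]
    rw [div_lt_iff₀ hδ] at hn
    nlinarith [hδ.le]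
  have hεtend : Tendsto ε atTop (𝓝 0) := by
    have h1 : Tendsto (fun n : ℕ => δ₁ * (1 / (n + 1))) atTop (𝓝 (δ₁ * 0)) :=
      tendsto_one_div_add_atTop_nhds_zero_nat.const_mul δ₁
    simpa [hε, div_eq_mul_inv] using h1
  -- the compact connected sets
  set K : ℕ → Set E2 := fun n => closure (Ω (ε n)) with hK
  have hKc : ∀ n, IsCompact (K n) :=
    fun n => (hbd.subset (hmono (hεle n))).isCompact_closure
  have hKconn : ∀ n, IsPreconnected (K n) := fun n => (hconn (ε n)).closure
  have hKmono : ∀ ⦃n m : ℕ⦄, n ≤ m → K m ⊆ K n :=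
    fun n m h => closure_mono (hmono (hεanti h))
  have hKint : IsPreconnected (⋂ n, K n) := my_isPreconnected_iInter K hKmono hKc hKconn
  have hx₀K : x₀ ∈ ⋂ n, K n :=
    Set.mem_iInter.mpr fun n => subset_closure (hx₀mem _ (hεpos n))
  have hKlevel : (⋂ n, K n) ⊆ H ⁻¹' {c₀} := by
    intro x hx
    simp only [Set.mem_iInter] at hx
    have habs : ∀ n, |H x - c₀| ≤ ε n := by
      intro n
      have := hclosure (ε n) (hx n)
      simp only [Set.mem_preimage, Set.mem_Icc] at this
      rw [abs_sub_le_iff]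
      constructor <;> linarith [this.1, this.2]
    have : |H x - c₀| ≤ 0 := ge_of_tendsto hεtend (Filter.Eventually.of_forall habs)
    have : |H x - c₀| = 0 := le_antisymm this (abs_nonneg _)
    have := abs_eq_zero.mp this
    simp only [Set.mem_preimage, Set.mem_singleton_iff]
    linarith
  have hKO : (⋂ n, K n) ⊆ O := by
    rw [hO]
    exact hKint.subset_connectedComponentIn hx₀K hKlevel
  -- the intersection of the Ω's
  set T : Set E2 := ⋂ n, Ω (ε n) with hT
  have hTnull : volume T = 0 := by
    apply measure_mono_null _ hvol
    exact (Set.iInter_mono fun n => subset_closure).trans hKO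
  -- integrability
  have hint : IntegrableOn (lap H) (closure (Ω δ₁)) volume :=
    lapc.continuousOn.integrableOn_compact hbd.isCompact_closure
  have hbound_int : Integrable (Set.indicator (Ω δ₁) fun x => ‖lap H x‖) volume := by
    rw [integrable_indicator_iff (hopen δ₁).measurableSet]
    exact IntegrableOn.mono_set hint.norm subset_closure
  -- limit of the indicator integrals
  have hlim0 : ∫ x, Set.indicator T (lap H) x = 0 := by
    have hae : Set.indicator T (lap H) =ᵐ[volume] 0 := by
      have h1 : ∀ᵐ x ∂(volume : Measure E2), x ∉ T := measure_eq_zero_iff_ae_notMem.mp hTnull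
      filter_upwards [h1] with x hx
      simp [Set.indicator_of_notMem hx]
    rw [integral_congr_ae hae]
    simp
  have hDCT : Tendsto (fun δ => ∫ x in Ω δ, lap H x) (𝓝[>] (0:ℝ)) (𝓝 0) := by
    have key : Tendsto (fun δ => ∫ x, Set.indicator (Ω δ) (lap H) x) (𝓝[>] (0:ℝ))
        (𝓝 (∫ x, Set.indicator T (lap H) x)) := by
      apply tendsto_integral_filter_of_dominated_convergence
        (Set.indicator (Ω δ₁) fun x => ‖lap H x‖)
      · exact Filter.Eventually.of_forall fun δ =>
          lapc.aestronglyMeasurable.indicator (hopen δ).measurableSet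
      · filter_upwards [Ioo_mem_nhdsGT_of_mem (Set.left_mem_Ico.mpr hδ₁pos)] with δ hδ
        apply Filter.Eventually.of_forall
        intro x
        have h1 := norm_indicator_le_of_subset (hmono hδ.2.le) (lap H) x
        simpa [norm_indicator_eq_indicator_norm] using h1
      · exact hbound_int
      · apply Filter.Eventually.of_forall
        intro x
        by_cases hx : x ∈ T
        · have hxΩ : ∀ δ : ℝ, 0 < δ → x ∈ Ω δ := by
            intro δ hδ
            obtain ⟨n, hn⟩ := hεsmall δ hδ
            exact hmono hn (Set.mem_iInter.mp hx n)
          rw [Set.indicator_of_mem hx]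
          apply tendsto_const_nhds.congr'
          filter_upwards [self_mem_nhdsWithin] with δ hδ
          rw [Set.indicator_of_mem (hxΩ δ hδ)]
        · obtain ⟨n, hxn⟩ : ∃ n, x ∉ Ω (ε n) := by
            by_contra hcon
            push_neg at hcon
            exact hx (Set.mem_iInter.mpr hcon)
          rw [Set.indicator_of_notMem hx]
          apply tendsto_const_nhds.congr'
          filter_upwards [Ioo_mem_nhdsGT_of_mem (Set.left_mem_Ico.mpr (hεpos n))] with δ hδ
          rw [Set.indicator_of_notMem (fun h => hxn (hmono hδ.2.le h))]
    rw [hlim0] at key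
    have hiq : ∀ δ : ℝ, ∫ x in Ω δ, lap H x = ∫ x, Set.indicator (Ω δ) (lap H) x :=
      fun δ => (integral_indicator (hopen δ).measurableSet).symm
    simpa [hiq] using key
  -- the limit of the fluxes
  have hplus : Tendsto (fun δ : ℝ => c₀ + δ) (𝓝[>] (0:ℝ)) (𝓝[>] c₀) := by
    apply tendsto_nhdsWithin_of_tendsto_nhds_of_eventually_within
    · have h0 : Tendsto (fun δ : ℝ => c₀ + δ) (𝓝 (0:ℝ)) (𝓝 c₀) := by
        simpa [Pi.add_def] using ((continuous_const.add continuous_id).tendsto (0:ℝ))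
      exact h0.mono_left nhdsWithin_le_nhds
    · filter_upwards [self_mem_nhdsWithin] with δ hδ
      simp only [Set.mem_Ioi] at hδ ⊢
      linarith
  have hminus : Tendsto (fun δ : ℝ => c₀ - δ) (𝓝[>] (0:ℝ)) (𝓝[<] c₀) := by
    apply tendsto_nhdsWithin_of_tendsto_nhds_of_eventually_within
    · have h0 : Tendsto (fun δ : ℝ => c₀ - δ) (𝓝 (0:ℝ)) (𝓝 c₀) := by
        simpa [Pi.sub_def] using ((continuous_const.sub continuous_id).tendsto (0:ℝ))
      exact h0.mono_left nhdsWithin_le_nhds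
    · filter_upwards [self_mem_nhdsWithin] with δ hδ
      simp only [Set.mem_Ioi] at hδ
      simp only [Set.mem_Iio]
      linarith
  have hRlim : Tendsto (fun δ : ℝ => (∑ i ∈ Jp, flux i (c₀ + δ)) - ∑ i ∈ Jm, flux i (c₀ - δ))
      (𝓝[>] (0:ℝ)) (𝓝 ((∑ i ∈ Jp, α i) - ∑ i ∈ Jm, α i)) := by
    apply Tendsto.sub
    · exact tendsto_finset_sum _ fun i hi => (hαp i hi).comp hplus
    · exact tendsto_finset_sum _ fun i hi => (hαm i hi).comp hminus
  have heq : (fun δ => ∫ x in Ω δ, lap H x) =ᶠ[𝓝[>] (0:ℝ)]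
      (fun δ : ℝ => (∑ i ∈ Jp, flux i (c₀ + δ)) - ∑ i ∈ Jm, flux i (c₀ - δ)) := by
    filter_upwards [Ioo_mem_nhdsGT_of_mem (Set.left_mem_Ico.mpr hδ₀)] with δ hδ
    exact hDiv δ hδ
  have hzero : (∑ i ∈ Jp, α i) - ∑ i ∈ Jm, α i = 0 :=
    tendsto_nhds_unique (hRlim.congr' heq.symm) hDCT
  linarith
end
end
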